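/- For the quadratic loss u(s)=−s²/(2Δ) with Δ>0 and gaussian prior, the asymptotic mean-square error is independent of the inverse temperature: writing q(Δ,κ,h) for the q-component of the unique solution of the fixed-point system (given explicitly by q = c²(h²(Δ+c)²+Δ*α)/((Δ+c)²−αc²) with c = (√((2κΔ+α−1)²+8κΔ)−(2κΔ+α−1))/(4κ)), one has q(Δ/β, βκ, 2βκ√γ) = q(Δ, κ, 2κ√γ) for every β>0, every Δ,κ>0, α>0, Δ*≥0 and γ≥0. -/

import Mathlib

noncomputable section

/-- The constant `c = (√((2κΔ+α−1)² + 8κΔ) − (2κΔ+α−1)) / (4κ)`. -/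
def cConst (α Δ κ : ℝ) : ℝ :=
  (Real.sqrt ((2 * κ * Δ + α - 1) ^ 2 + 8 * κ * Δ) - (2 * κ * Δ + α - 1)) / (4 * κ)

/-- The `q`-component of the unique solution of the fixed-point system for the
quadratic loss `u(s) = −s²/(2Δ)`:
`q = c²(h²(Δ+c)² + Δ*α) / ((Δ+c)² − αc²)`. -/
def qFixed (α Δs Δ κ h : ℝ) : ℝ :=
  (cConst α Δ κ) ^ 2 * (h ^ 2 * (Δ + cConst α Δ κ) ^ 2 + Δs * α) /
    ((Δ + cConst α Δ κ) ^ 2 - α * (cConst α Δ κ) ^ 2)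

/- The substitution `(Δ, κ, h) ↦ (Δ/β, βκ, βh)` fixes `κΔ`, hence the square root in `c`, so
`c ↦ c/β`. Then `Δ + c ↦ (Δ + c)/β` while `h (Δ + c)` is fixed, so numerator and denominator of
`q` both acquire the factor `β⁻²`. -/

theorem cConst_div_mul (α Δ κ : ℝ) {β : ℝ} (hβ : β ≠ 0) :
    cConst α (Δ / β) (β * κ) = cConst α Δ κ / β := by
  have hκΔ : β * κ * (Δ / β) = κ * Δ := by field_simp
  unfold cConst
  rw [mul_assoc 2, mul_assoc 8, hκΔ, div_div]
  ring_nf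

theorem qFixed_div_mul_mul (α Δs Δ κ h : ℝ) {β : ℝ} (hβ : β ≠ 0) :
    qFixed α Δs (Δ / β) (β * κ) (β * h) = qFixed α Δs Δ κ h := by
  unfold qFixed
  rw [cConst_div_mul α Δ κ hβ]
  set c := cConst α Δ κ
  have hnum : (c / β) ^ 2 * ((β * h) ^ 2 * (Δ / β + c / β) ^ 2 + Δs * α) =
      c ^ 2 * (h ^ 2 * (Δ + c) ^ 2 + Δs * α) / β ^ 2 := by
    field_simp
  have hden : (Δ / β + c / β) ^ 2 - α * (c / β) ^ 2 = ((Δ + c) ^ 2 - α * c ^ 2) / β ^ 2 := by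
    field_simp
  rw [hnum, hden, div_div_div_cancel_right₀ (pow_ne_zero 2 hβ)]

theorem quadratic_q_temperature_independent_general
    (α Δs Δ κ γ β : ℝ) (hβ : 0 < β) :
    qFixed α Δs (Δ / β) (β * κ) (2 * (β * κ) * Real.sqrt γ) =
      qFixed α Δs Δ κ (2 * κ * Real.sqrt γ) := by
  rw [show 2 * (β * κ) * Real.sqrt γ = β * (2 * κ * Real.sqrt γ) by ring]
  exact qFixed_div_mul_mul α Δs Δ κ _ hβ.ne'

/-- for the quadratic loss with gaussian prior, the asymptotic
mean-square error is independent of the inverse temperature `β`: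
`q(Δ/β, βκ, 2βκ√γ) = q(Δ, κ, 2κ√γ)` for all `β > 0`. -/
theorem quadratic_q_temperature_independent
    (α Δs Δ κ γ β : ℝ) (hα : 0 < α) (hΔs : 0 ≤ Δs) (hΔ : 0 < Δ) (hκ : 0 < κ)
    (hγ : 0 ≤ γ) (hβ : 0 < β) :
    qFixed α Δs (Δ / β) (β * κ) (2 * (β * κ) * Real.sqrt γ) =
      qFixed α Δs Δ κ (2 * κ * Real.sqrt γ) :=
  quadratic_q_temperature_independent_general α Δs Δ κ γ β hβ

end
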